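/- arXiv:1309.5666 — 5 statements merged into one kernel-verified Lean document; each statement's English description precedes it below -/
import Mathlib

section
/- Let S1 and S2 be sets of generators of the affine semigroups L1 ∩ P1 and L2 ∩ P2 respectively, and T the generating set of the free (simplicial) affine semigroup L ∩ D, where π1(S1) ⊆ T and π2(S2) ⊆ T. If the affine semigroup L ∩ D has unique factorization into its generators T (i.e., it is a free commutative monoid on T), then the set S1 ×_T S2 = {(s,t) ∈ S1 × S2 : π1(s) = π2(t)} generates the fiber product semigroup (L1 × L2) ∩ (P1 ×_D P2). -/
/-- A commutative monoid `D` is *free on a subset* `T` if every element of `D` factors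
uniquely as a finite sum of elements of `T`, i.e. the summation map from multisets of
elements of `T` to `D` is bijective. -/
def IsFreeOn {D : Type*} [AddCommMonoid D] (T : Set D) : Prop :=
  Function.Bijective (fun m : Multiset T => (m.map (Subtype.val)).sum)

/-!
Factor `x = ∑ sᵢ` and `y = ∑ tⱼ` into generators. If `π₁ x = π₂ y`, then `∑ π₁ sᵢ = ∑ π₂ tⱼ`
are two factorizations into elements of `T`, so by freeness the multisets `{π₁ sᵢ}` and
`{π₂ tⱼ}` agree. Matching equal entries pairs the `sᵢ` with the `tⱼ`, writing `(x, y)` as a sum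
of pairs `(sᵢ, tⱼ)` with `π₁ sᵢ = π₂ tⱼ`.
-/

theorem Multiset.Rel.exists_map_fst_map_snd {α β : Type*} {r : α → β → Prop}
    {s : Multiset α} {t : Multiset β} (h : Multiset.Rel r s t) :
    ∃ u : Multiset (α × β), u.map Prod.fst = s ∧ u.map Prod.snd = t ∧ ∀ p ∈ u, r p.1 p.2 := by
  induction h with
  | zero => exact ⟨0, rfl, rfl, by simp⟩
  | @cons a b s t hab _ ih =>
    obtain ⟨u, rfl, rfl, hu⟩ := ih
    refine ⟨(a, b) ::ₘ u, by simp, by simp, ?_⟩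
    simpa [hab] using hu

theorem IsFreeOn.eq_of_sum_eq {D : Type*} [AddCommMonoid D] {T : Set D} (hT : IsFreeOn T)
    {a b : Multiset D} (ha : ∀ x ∈ a, x ∈ T) (hb : ∀ x ∈ b, x ∈ T) (h : a.sum = b.sum) :
    a = b := by
  lift a to Multiset T using ha
  lift b to Multiset T using hb
  rw [hT.injective h]

theorem Multiset.sum_eq_mk_sum_fst_sum_snd {M₁ M₂ : Type*} [AddCommMonoid M₁] [AddCommMonoid M₂]
    (u : Multiset (M₁ × M₂)) : u.sum = ((u.map Prod.fst).sum, (u.map Prod.snd).sum) :=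
  Prod.ext (map_multiset_sum (AddMonoidHom.fst M₁ M₂) u)
    (map_multiset_sum (AddMonoidHom.snd M₁ M₂) u)

theorem fiberProduct_semigroup_generators_general
    {M₁ M₂ D : Type*} [AddCommMonoid M₁] [AddCommMonoid M₂] [AddCommMonoid D]
    (π₁ : M₁ →+ D) (π₂ : M₂ →+ D)
    (S₁ : Set M₁) (S₂ : Set M₂) (T : Set D)
    (hS₁ : AddSubmonoid.closure S₁ = ⊤) (hS₂ : AddSubmonoid.closure S₂ = ⊤)
    (hπ₁ : π₁ '' S₁ ⊆ T) (hπ₂ : π₂ '' S₂ ⊆ T)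
    (hfree : IsFreeOn T) :
    AddSubmonoid.closure {p : M₁ × M₂ | p.1 ∈ S₁ ∧ p.2 ∈ S₂ ∧ π₁ p.1 = π₂ p.2}
      = AddMonoidHom.eqLocusM (π₁.comp (AddMonoidHom.fst M₁ M₂))
          (π₂.comp (AddMonoidHom.snd M₁ M₂)) := by
  refine le_antisymm (AddSubmonoid.closure_le.2 fun p hp => hp.2.2) ?_
  rintro ⟨x, y⟩ (hxy : π₁ x = π₂ y)
  obtain ⟨m₁, hm₁, rfl⟩ :=
    AddSubmonoid.exists_multiset_of_mem_closure (hS₁ ▸ AddSubmonoid.mem_top x)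
  obtain ⟨m₂, hm₂, rfl⟩ :=
    AddSubmonoid.exists_multiset_of_mem_closure (hS₂ ▸ AddSubmonoid.mem_top y)
  have hmap : m₁.map π₁ = m₂.map π₂ := by
    refine hfree.eq_of_sum_eq ?_ ?_ (by simpa only [map_multiset_sum] using hxy)
    · simpa using fun s hs => hπ₁ ⟨s, hm₁ s hs, rfl⟩
    · simpa using fun t ht => hπ₂ ⟨t, hm₂ t ht, rfl⟩
  obtain ⟨u, rfl, rfl, hu⟩ :=
    (Multiset.rel_map.1 (Multiset.rel_eq.2 hmap)).exists_map_fst_map_snd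
  rw [← Multiset.sum_eq_mk_sum_fst_sum_snd]
  refine AddSubmonoid.multiset_sum_mem _ _ fun p hp =>
    AddSubmonoid.subset_closure ⟨?_, ?_, hu p hp⟩
  · exact hm₁ _ (Multiset.mem_map_of_mem _ hp)
  · exact hm₂ _ (Multiset.mem_map_of_mem _ hp)

/-- Let `S₁`, `S₂` generate the affine semigroups `M₁ = L₁ ∩ P₁` and
`M₂ = L₂ ∩ P₂`, let `T` generate the base semigroup `D = L ∩ D`, with `π₁(S₁) ⊆ T` and
`π₂(S₂) ⊆ T`.  If `D` has unique factorization into the generators `T` (it is a free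
commutative monoid on `T`), then the set
`S₁ ×_T S₂ = {(s, t) ∈ S₁ × S₂ | π₁ s = π₂ t}` generates the fiber product semigroup
`{(x, y) | π₁ x = π₂ y}`. -/
theorem fiberProduct_semigroup_generators
    {M₁ M₂ D : Type*} [AddCommMonoid M₁] [AddCommMonoid M₂] [AddCommMonoid D]
    (π₁ : M₁ →+ D) (π₂ : M₂ →+ D)
    (S₁ : Set M₁) (S₂ : Set M₂) (T : Set D)
    (hS₁ : AddSubmonoid.closure S₁ = ⊤) (hS₂ : AddSubmonoid.closure S₂ = ⊤)
    (hT : AddSubmonoid.closure T = ⊤)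
    (hπ₁ : π₁ '' S₁ ⊆ T) (hπ₂ : π₂ '' S₂ ⊆ T)
    (hfree : IsFreeOn T) :
    AddSubmonoid.closure {p : M₁ × M₂ | p.1 ∈ S₁ ∧ p.2 ∈ S₂ ∧ π₁ p.1 = π₂ p.2}
      = AddMonoidHom.eqLocusM (π₁.comp (AddMonoidHom.fst M₁ M₂))
          (π₂.comp (AddMonoidHom.snd M₁ M₂)) :=
  fiberProduct_semigroup_generators_general π₁ π₂ S₁ S₂ T hS₁ hS₂ hπ₁ hπ₂ hfree
end

section
/- With the hypotheses above (generators mapping to generators of a free base semigroup D), every relation among the generators S1 ×_T S2 of the fiber product semigroup P1 ×_D P2 is generated by relations lifted from P1, relations lifted from P2, and the swap relations (a,c) + (b,d) = (b,c) + (a,d), where a,b ∈ S1, c,d ∈ S2 satisfy π1(a) = π2(c) = π1(b) = π2(d). -/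
theorem Prod.add_eq_add_of_swap {M₁ M₂ : Type*} [AddCommMonoid M₁] [AddCommMonoid M₂]
    {a b c d : M₁ × M₂} (hac : a.1 = c.1) (had : a.2 = d.2) (hbd : b.1 = d.1)
    (hbc : b.2 = c.2) : a + b = c + d :=
  Prod.ext (by simp only [Prod.fst_add, hac, hbd]) (by simp only [Prod.snd_add, had, hbc, add_comm])

theorem Multiset.Rel.exists_map_eq_map {α β γ δ ε : Type*} {r : α → β → Prop}
    {u : Multiset α} {v : Multiset β} (h : Multiset.Rel r u v)
    (f : α → γ) (g : β → δ) (p : ε → γ) (q : ε → δ)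
    (hpq : ∀ a b, r a b → ∃ e, p e = f a ∧ q e = g b) :
    ∃ w : Multiset ε, w.map p = u.map f ∧ w.map q = v.map g := by
  induction h with
  | zero => exact ⟨0, rfl, rfl⟩
  | @cons a b _ _ hab _ ih =>
    obtain ⟨w, hwu, hwv⟩ := ih
    obtain ⟨e, hea, heb⟩ := hpq a b hab
    exact ⟨e ::ₘ w, by simp [hea, hwu], by simp [heb, hwv]⟩

theorem Multiset.sum_map_eq_sum_map_iff_fst_snd {α M₁ M₂ : Type*}
    [AddCommMonoid M₁] [AddCommMonoid M₂] {f : α → M₁ × M₂} {s t : Multiset α} :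
    (s.map f).sum = (t.map f).sum ↔
      (s.map fun a => (f a).1).sum = (t.map fun a => (f a).1).sum ∧
        (s.map fun a => (f a).2).sum = (t.map fun a => (f a).2).sum := by
  have hfst (s : Multiset α) : (s.map f).sum.1 = (s.map fun a => (f a).1).sum := by
    simpa [Multiset.map_map] using map_multiset_sum (AddMonoidHom.fst M₁ M₂) (s.map f)
  have hsnd (s : Multiset α) : (s.map f).sum.2 = (s.map fun a => (f a).2).sum := by
    simpa [Multiset.map_map] using map_multiset_sum (AddMonoidHom.snd M₁ M₂) (s.map f)
  rw [Prod.ext_iff, hfst, hfst, hsnd, hsnd]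

theorem IsFreeOn.map_eq_of_sum_map_eq {α D : Type*} [AddCommMonoid D] {T : Set D}
    (hT : IsFreeOn T) {f : α → T} {u v : Multiset α}
    (h : (u.map fun a => (f a : D)).sum = (v.map fun a => (f a : D)).sum) :
    u.map f = v.map f :=
  hT.injective (by simp only [Multiset.map_map]; exact h)

theorem exists_map_snd_eq_map_fst_eq_of_sum_fst_eq {M₁ M₂ D : Type*} [AddCommMonoid M₁]
    [AddCommMonoid D] (π₁ : M₁ →+ D) {T : Set D} (hT : IsFreeOn T) {G : Set (M₁ × M₂)}
    (hlabel : ∀ g : G, π₁ g.val.1 ∈ T)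
    (hswap : ∀ a b : G, π₁ a.val.1 = π₁ b.val.1 → (b.val.1, a.val.2) ∈ G)
    {x y : Multiset G}
    (h : (x.map fun g => g.val.1).sum = (y.map fun g => g.val.1).sum) :
    ∃ z : Multiset G, z.map (fun g => g.val.2) = x.map (fun g => g.val.2) ∧
      z.map (fun g => g.val.1) = y.map (fun g => g.val.1) := by
  let label : G → T := fun g => ⟨π₁ g.val.1, hlabel g⟩
  have hlabels : x.map label = y.map label := by
    have hπ := congrArg π₁ h
    simp only [map_multiset_sum, Multiset.map_map] at hπ
    exact hT.map_eq_of_sum_map_eq hπ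
  have hrel : Multiset.Rel (fun a b => label a = label b) x y :=
    Multiset.rel_map.mp (Multiset.rel_eq.mpr hlabels)
  refine hrel.exists_map_eq_map _ _ _ _ fun a b hab => ⟨⟨_, hswap a b ?_⟩, rfl, rfl⟩
  exact congrArg Subtype.val hab

theorem fiberProduct_semigroup_relations_general
    {M₁ M₂ D : Type*} [AddCommMonoid M₁] [AddCommMonoid M₂] [AddCommMonoid D]
    (π₁ : M₁ →+ D) (π₂ : M₂ →+ D)
    (S₁ : Set M₁) (S₂ : Set M₂) (T : Set D)
    (hπ₁ : π₁ '' S₁ ⊆ T)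
    (hfree : IsFreeOn T)
    -- the set of fiber-product generators
    (G : Set (M₁ × M₂))
    (hG : G = {p : M₁ × M₂ | p.1 ∈ S₁ ∧ p.2 ∈ S₂ ∧ π₁ p.1 = π₂ p.2})
    -- the generating relations
    (rel : Multiset G → Multiset G → Prop)
    (hrel : ∀ x y, rel x y ↔
      -- swap relations
      ((∃ a b c d : G, a.val.1 = c.val.1 ∧ a.val.2 = d.val.2 ∧
          b.val.1 = d.val.1 ∧ b.val.2 = c.val.2 ∧
          π₁ a.val.1 = π₁ b.val.1 ∧
          x = {a, b} ∧ y = {c, d}) ∨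
      -- relations lifted from M₁ (the second components are matched unchanged)
        (x.map (fun g => g.val.2) = y.map (fun g => g.val.2) ∧
          (x.map (fun g => g.val.1)).sum = (y.map (fun g => g.val.1)).sum) ∨
      -- relations lifted from M₂ (the first components are matched unchanged)
        (x.map (fun g => g.val.1) = y.map (fun g => g.val.1) ∧
          (x.map (fun g => g.val.2)).sum = (y.map (fun g => g.val.2)).sum))) :
    ∀ x y : Multiset G,
      (addConGen rel) x y ↔ (x.map Subtype.val).sum = (y.map Subtype.val).sum := by
  have hmem (g : G) : g.val.1 ∈ S₁ ∧ g.val.2 ∈ S₂ ∧ π₁ g.val.1 = π₂ g.val.2 :=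
    (Set.ext_iff.mp hG _).mp g.2
  have hswap (a b : G) (hab : π₁ a.val.1 = π₁ b.val.1) : (b.val.1, a.val.2) ∈ G :=
    (Set.ext_iff.mp hG _).mpr ⟨(hmem b).1, (hmem a).2.1, hab.symm.trans (hmem a).2.2⟩
  let eval : Multiset G →+ M₁ × M₂ :=
    Multiset.sumAddMonoidHom.comp (Multiset.mapAddMonoidHom Subtype.val)
  have hsound : addConGen rel ≤ AddCon.ker eval := by
    refine AddCon.addConGen_le.mpr fun u v huv => (AddCon.ker_rel _).mpr ?_
    change (u.map Subtype.val).sum = (v.map Subtype.val).sum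
    rcases (hrel u v).mp huv with
      ⟨a, b, c, d, hac, had, hbd, hbc, -, rfl, rfl⟩ | ⟨hsnd, hfst⟩ | ⟨hfst, hsnd⟩
    · simpa using Prod.add_eq_add_of_swap hac had hbd hbc
    · exact Multiset.sum_map_eq_sum_map_iff_fst_snd.mpr ⟨hfst, by rw [hsnd]⟩
    · exact Multiset.sum_map_eq_sum_map_iff_fst_snd.mpr ⟨by rw [hfst], hsnd⟩
  intro x y
  refine ⟨fun hxy => hsound hxy, fun hxy => ?_⟩
  obtain ⟨hfst, hsnd⟩ := Multiset.sum_map_eq_sum_map_iff_fst_snd.mp hxy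
  obtain ⟨z, hz₂, hz₁⟩ := exists_map_snd_eq_map_fst_eq_of_sum_fst_eq π₁ hfree
    (fun g => hπ₁ ⟨_, (hmem g).1, rfl⟩) hswap hfst
  have hxz : rel x z := (hrel x z).mpr (.inr (.inl ⟨hz₂.symm, hz₁ ▸ hfst⟩))
  have hzy : rel z y := (hrel z y).mpr (.inr (.inr ⟨hz₁, hz₂ ▸ hsnd⟩))
  exact (AddConGen.Rel.of _ _ hxz).trans (AddConGen.Rel.of _ _ hzy)

/-- With generators mapping to generators of a free base semigroup,
every relation among the generators `S₁ ×_T S₂` of the fiber product semigroup is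
generated by relations lifted from `M₁`, relations lifted from `M₂`, and the swap
relations `(a,c) + (b,d) = (b,c) + (a,d)` for `a, b ∈ S₁`, `c, d ∈ S₂` with
`π₁ a = π₂ c = π₁ b = π₂ d`.  Formally: the congruence on the free commutative monoid on
the fiber generators generated by these relations coincides with the kernel congruence of
the evaluation map. -/
theorem fiberProduct_semigroup_relations
    {M₁ M₂ D : Type*} [AddCommMonoid M₁] [AddCommMonoid M₂] [AddCommMonoid D]
    (π₁ : M₁ →+ D) (π₂ : M₂ →+ D)
    (S₁ : Set M₁) (S₂ : Set M₂) (T : Set D)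
    (hS₁ : AddSubmonoid.closure S₁ = ⊤) (hS₂ : AddSubmonoid.closure S₂ = ⊤)
    (hT : AddSubmonoid.closure T = ⊤)
    (hπ₁ : π₁ '' S₁ ⊆ T) (hπ₂ : π₂ '' S₂ ⊆ T)
    (hfree : IsFreeOn T)
    -- the set of fiber-product generators
    (G : Set (M₁ × M₂))
    (hG : G = {p : M₁ × M₂ | p.1 ∈ S₁ ∧ p.2 ∈ S₂ ∧ π₁ p.1 = π₂ p.2})
    -- the generating relations
    (rel : Multiset G → Multiset G → Prop)
    (hrel : ∀ x y, rel x y ↔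
      -- swap relations
      ((∃ a b c d : G, a.val.1 = c.val.1 ∧ a.val.2 = d.val.2 ∧
          b.val.1 = d.val.1 ∧ b.val.2 = c.val.2 ∧
          π₁ a.val.1 = π₁ b.val.1 ∧
          x = {a, b} ∧ y = {c, d}) ∨
      -- relations lifted from M₁ (the second components are matched unchanged)
        (x.map (fun g => g.val.2) = y.map (fun g => g.val.2) ∧
          (x.map (fun g => g.val.1)).sum = (y.map (fun g => g.val.1)).sum) ∨
      -- relations lifted from M₂ (the first components are matched unchanged)
        (x.map (fun g => g.val.1) = y.map (fun g => g.val.1) ∧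
          (x.map (fun g => g.val.2)).sum = (y.map (fun g => g.val.2)).sum))) :
    ∀ x y : Multiset G,
      (addConGen rel) x y ↔ (x.map Subtype.val).sum = (y.map Subtype.val).sum :=
  fiberProduct_semigroup_relations_general π₁ π₂ S₁ S₂ T hπ₁ hfree G hG rel hrel
end

section
/- The affine semigroup Q(B,P,B) determined by the classical Pieri rule is a free commutative monoid on 2m−1 generators; equivalently, R_3(B,P,B) is a polynomial ring in 2m−1 variables. The generators are the patterns [i,i] for 1 ≤ i ≤ m−1 and [i+1,i] for 0 ≤ i ≤ m−1, where [i,i] is the interlacing pattern with i ones in both rows followed by zeros, and [i+1,i] has i+1 ones on the top row and i ones on the bottom row. Every interlacing pattern b with top row (a_1 ≥ … ≥ a_m) and bottom row (b_1 ≥ … ≥ b_{m-1}) decomposes uniquely as a nonnegative integer combination of these generators. -/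
/-- The row with `k` ones followed by zeros. -/
def onesRow (d k : ℕ) : Fin d → ℕ := fun j => if (j : ℕ) < k then 1 else 0

/-- The pattern `[i,i]` (here `i = e.val + 1` ranges over `1 ≤ i ≤ m-1`, `m = n+1`):
`i` ones on the top row and `i` ones on the bottom row, followed by zeros. -/
def genEq (n : ℕ) (e : Fin n) : (Fin (n + 1) → ℕ) × (Fin n → ℕ) :=
  (onesRow (n + 1) (e + 1), onesRow n (e + 1))

/-- The pattern `[i+1,i]` (`0 ≤ i ≤ m-1`, `m = n+1`): `i+1` ones on the top row and `i`
ones on the bottom row, followed by zeros. -/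
def genStep (n : ℕ) (e : Fin (n + 1)) : (Fin (n + 1) → ℕ) × (Fin n → ℕ) :=
  (onesRow (n + 1) (e + 1), onesRow n e)

/-- The `2m-1` generators of `Q(B,P,B)`, `m = n+1`. -/
def pieriGen (n : ℕ) : Fin n ⊕ Fin (n + 1) → (Fin (n + 1) → ℕ) × (Fin n → ℕ) :=
  Sum.elim (genEq n) (genStep n)

/-- The set of interlacing patterns: pairs `(a, b) ∈ ℕ^m × ℕ^{m-1}` with
`a_1 ≥ b_1 ≥ a_2 ≥ … ≥ b_{m-1} ≥ a_m`. -/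
def InterlacingPatterns (n : ℕ) : Set ((Fin (n + 1) → ℕ) × (Fin n → ℕ)) :=
  {p | ∀ i : Fin n, p.2 i ≤ p.1 i.castSucc ∧ p.1 i.succ ≤ p.2 i}

/-!
Read a pattern as the chain `a₁ ≥ b₁ ≥ a₂ ≥ ⋯ ≥ b_{m-1} ≥ aₘ`. The generators are the
indicators of its initial segments, so in a combination `∑ c g • g` each coefficient is one
gap of the chain (or `aₘ` itself). Taking these gaps as coefficients, which is possible
exactly when the chain is nonincreasing, inverts the combination map.
-/

section

open Finset

def pieriSum (n : ℕ) (c : Fin n ⊕ Fin (n + 1) → ℕ) : (Fin (n + 1) → ℕ) × (Fin n → ℕ) :=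
  ∑ g, c g • pieriGen n g

def pieriCoef (n : ℕ) (p : (Fin (n + 1) → ℕ) × (Fin n → ℕ)) : Fin n ⊕ Fin (n + 1) → ℕ :=
  Sum.elim (fun j => p.2 j - p.1 j.succ)
    (Fin.lastCases (p.1 (Fin.last n)) fun j => p.1 j.castSucc - p.2 j)

variable {n : ℕ}

theorem pieriGen_mem (g : Fin n ⊕ Fin (n + 1)) : pieriGen n g ∈ InterlacingPatterns n := by
  rcases g with e | e <;> intro i <;>
    simp only [pieriGen, Sum.elim_inl, Sum.elim_inr, genEq, genStep, onesRow,
      Fin.val_castSucc, Fin.val_succ] <;>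
    constructor <;> split_ifs <;> omega

theorem pieriGen_fst_castSucc (g : Fin n ⊕ Fin (n + 1)) (j : Fin n) :
    (pieriGen n g).1 j.castSucc = (pieriGen n g).2 j + if g = .inr j.castSucc then 1 else 0 := by
  rcases g with e | e <;>
    simp only [pieriGen, Sum.elim_inl, Sum.elim_inr, genEq, genStep, onesRow,
      reduceCtorEq, if_false, Sum.inr.injEq, Fin.ext_iff, Fin.val_castSucc] <;>
    split_ifs <;> omega

theorem pieriGen_snd (g : Fin n ⊕ Fin (n + 1)) (j : Fin n) :
    (pieriGen n g).2 j = (pieriGen n g).1 j.succ + if g = .inl j then 1 else 0 := by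
  rcases g with e | e <;>
    simp only [pieriGen, Sum.elim_inl, Sum.elim_inr, genEq, genStep, onesRow,
      reduceCtorEq, if_false, Sum.inl.injEq, Fin.ext_iff, Fin.val_succ] <;>
    split_ifs <;> omega

theorem pieriGen_fst_last (g : Fin n ⊕ Fin (n + 1)) :
    (pieriGen n g).1 (Fin.last n) = if g = .inr (Fin.last n) then 1 else 0 := by
  rcases g with e | e <;>
    simp only [pieriGen, Sum.elim_inl, Sum.elim_inr, genEq, genStep, onesRow,
      reduceCtorEq, if_false, Sum.inr.injEq, Fin.ext_iff, Fin.val_last] <;>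
    split_ifs <;> omega

variable (c : Fin n ⊕ Fin (n + 1) → ℕ)

theorem pieriSum_fst_apply (j : Fin (n + 1)) :
    (pieriSum n c).1 j = ∑ g, c g * (pieriGen n g).1 j := by
  simp [pieriSum, Prod.fst_sum, Finset.sum_apply]

theorem pieriSum_snd_apply (j : Fin n) :
    (pieriSum n c).2 j = ∑ g, c g * (pieriGen n g).2 j := by
  simp [pieriSum, Prod.snd_sum, Finset.sum_apply]

theorem pieriSum_fst_castSucc (j : Fin n) :
    (pieriSum n c).1 j.castSucc = (pieriSum n c).2 j + c (.inr j.castSucc) := by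
  simp only [pieriSum_fst_apply, pieriSum_snd_apply, pieriGen_fst_castSucc, mul_add,
    sum_add_distrib, mul_ite, mul_one, mul_zero, sum_ite_eq', mem_univ, if_true]

theorem pieriSum_snd (j : Fin n) :
    (pieriSum n c).2 j = (pieriSum n c).1 j.succ + c (.inl j) := by
  simp only [pieriSum_fst_apply, pieriSum_snd_apply, pieriGen_snd, mul_add,
    sum_add_distrib, mul_ite, mul_one, mul_zero, sum_ite_eq', mem_univ, if_true]

theorem pieriSum_fst_last : (pieriSum n c).1 (Fin.last n) = c (.inr (Fin.last n)) := by
  simp only [pieriSum_fst_apply, pieriGen_fst_last, mul_ite, mul_one, mul_zero, sum_ite_eq',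
    mem_univ, if_true]

theorem pieriCoef_pieriSum : pieriCoef n (pieriSum n c) = c := by
  funext g
  rcases g with j | e
  · simp [pieriCoef, pieriSum_snd]
  · induction e using Fin.lastCases with
    | last => simp [pieriCoef, pieriSum_fst_last]
    | cast j => simp [pieriCoef, pieriSum_fst_castSucc]

theorem pieriSum_pieriCoef {p : (Fin (n + 1) → ℕ) × (Fin n → ℕ)}
    (hp : p ∈ InterlacingPatterns n) :
    pieriSum n (pieriCoef n p) = p := by
  have hfst : ∀ j, (pieriSum n (pieriCoef n p)).1 j = p.1 j := by
    intro j
    induction j using Fin.reverseInduction with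
    | last => simp [pieriSum_fst_last, pieriCoef]
    | cast j ih =>
      obtain ⟨hb_le, ha_le⟩ := hp j
      rw [pieriSum_fst_castSucc, pieriSum_snd, ih]
      simp only [pieriCoef, Sum.elim_inl, Sum.elim_inr, Fin.lastCases_castSucc]
      omega
  refine Prod.ext (funext hfst) (funext fun j => ?_)
  obtain ⟨hb_le, ha_le⟩ := hp j
  rw [pieriSum_snd, hfst]
  simp only [pieriCoef, Sum.elim_inl]
  omega

end

/-- The affine semigroup `Q(B,P,B)` of interlacing patterns determined
by the classical Pieri rule is a free commutative monoid on the `2m-1` generators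
`[i,i]` (`1 ≤ i ≤ m-1`) and `[i+1,i]` (`0 ≤ i ≤ m-1`), `m = n+1`: each generator is an
interlacing pattern, and every interlacing pattern decomposes uniquely as a nonnegative
integer combination of these generators. -/
theorem QBPB_free (n : ℕ) :
    (∀ g, pieriGen n g ∈ InterlacingPatterns n) ∧
    ∀ p ∈ InterlacingPatterns n,
      ∃! c : Fin n ⊕ Fin (n + 1) → ℕ, p = ∑ g, c g • pieriGen n g :=
  ⟨pieriGen_mem, fun p hp =>
    ⟨pieriCoef n p, (pieriSum_pieriCoef hp).symm, fun c hc => hc ▸ (pieriCoef_pieriSum c).symm⟩⟩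
end

section
/- The minimal generating set of the affine semigroup P(a,b) consists exactly of the tuples (i_1, …, i_{a+b−1}) of elements of ℤ/mℤ such that: i_1, i_{a+b−1} ∈ {m−1, 0}; i_k − i_{k+1} ∈ {0, 1} (mod m) for 1 ≤ k ≤ a−1; and i_k − i_{k+1} ∈ {0, −1} (mod m) for a ≤ k ≤ a+b−2. In particular, since all these generators have level 1 and any product of level-1 elements has level ≥ 2, this generating set is minimal. -/
/-!
Grade `P(a,b)` by the level of slot `0`; gluing forces every slot to have that level, so only
`0` has level `0`. In a nonzero element, following a generator of slot `0` to a generator of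
slot `1` starting at its right boundary label, and so on, gives a path of generators, one per
slot, glued end to end: an embedded tuple of `X_{a,b}`. Removing it leaves an element of
`P(a,b)` of smaller level, so the level-one tuples of `X_{a,b}` generate, and they are
exactly the elements that cannot be split into two nonzero ones.
-/

/-- The set `X_{a,b}` of tuples over `ℤ/mℤ`. -/
def Xab (m a b : ℕ) : Set (Fin (a + b - 1) → ZMod m) :=
  {i | ∃ h0 : 0 < a + b - 1, ∃ hl : a + b - 2 < a + b - 1,
    i ⟨0, h0⟩ ∈ ({0, ((m - 1 : ℕ) : ZMod m)} : Set (ZMod m)) ∧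
    i ⟨a + b - 2, hl⟩ ∈ ({0, ((m - 1 : ℕ) : ZMod m)} : Set (ZMod m)) ∧
    ∀ (k : ℕ) (hk : k + 1 < a + b - 1),
      (k < a - 1 → i ⟨k, by omega⟩ - i ⟨k + 1, hk⟩ ∈ ({0, 1} : Set (ZMod m))) ∧
      (a - 1 ≤ k → i ⟨k, by omega⟩ - i ⟨k + 1, hk⟩ ∈ ({0, -1} : Set (ZMod m)))}

/-- The ambient product of the free monoids attached to the `a+b-2` internal vertices of
the caterpillar tree: at each slot, the free commutative monoid on pairs of boundary
labels in `ℤ/mℤ`. -/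
abbrev BigM (m a b : ℕ) := Fin (a + b - 2) → ((ZMod m × ZMod m) →₀ ℕ)

/-- Validity of a generator label at slot `s` for the K-Pieri semigroups. -/
def validPair (m a b : ℕ) (s : ℕ) (p : ZMod m × ZMod m) : Prop :=
  (s < a - 1 → p.1 - p.2 ∈ ({0, 1} : Set (ZMod m))) ∧
  (a - 1 ≤ s → p.1 - p.2 ∈ ({0, -1} : Set (ZMod m))) ∧
  (s = 0 → p.1 ∈ ({0, ((m - 1 : ℕ) : ZMod m)} : Set (ZMod m))) ∧
  (s = a + b - 3 → p.2 ∈ ({0, ((m - 1 : ℕ) : ZMod m)} : Set (ZMod m)))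

/-- The embedding of a tuple of `X_{a,b}` as a level-one element of the fiber product:
at each slot, the single K-Pieri generator labelled by the two consecutive entries. -/
noncomputable def embP (m a b : ℕ) (i : Fin (a + b - 1) → ZMod m) : BigM m a b :=
  fun s => match s with
  | ⟨sv, hs⟩ => Finsupp.single (i ⟨sv, by omega⟩, i ⟨sv + 1, by omega⟩) 1

open Finsupp

section Chain

variable {α : Type*} {N : ℕ}

/-- `x s` lists, with multiplicity, the generators `(i, j)` at slot `s`; gluing over `Δ^m`
matches the right labels of slot `s` with the left labels of slot `s + 1`. -/
def IsGlued (x : Fin N → (α × α →₀ ℕ)) : Prop :=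
  ∀ (s : ℕ) (hs : s + 1 < N),
    mapDomain Prod.snd (x ⟨s, by omega⟩) = mapDomain Prod.fst (x ⟨s + 1, hs⟩)

theorem IsGlued.of_add_left {x y : Fin N → (α × α →₀ ℕ)} (hxy : IsGlued (x + y))
    (hx : IsGlued x) : IsGlued y := fun s hs => by
  have h := hxy s hs
  simp only [Pi.add_apply, mapDomain_add, hx s hs] at h
  exact add_left_cancel h

theorem IsGlued.degree_eq {x : Fin N → (α × α →₀ ℕ)} (hx : IsGlued x) (s : Fin N) :
    degree (x s) = degree (x ⟨0, s.pos⟩) := by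
  obtain ⟨s, hs⟩ := s
  induction s with
  | zero => rfl
  | succ s ih => rw [← ih (by omega), ← degree_mapDomain Prod.fst, ← hx s hs, degree_mapDomain]

theorem IsGlued.eq_zero_of_degree_eq_zero {x : Fin N → (α × α →₀ ℕ)} (hx : IsGlued x)
    (hN : 0 < N) (h : degree (x ⟨0, hN⟩) = 0) : x = 0 :=
  funext fun s => (degree_eq_zero_iff _).1 (hx.degree_eq s ▸ h)

theorem IsGlued.exists_path {x : Fin N → (α × α →₀ ℕ)} (hx : IsGlued x) (hN : 0 < N)
    (hx0 : x ⟨0, hN⟩ ≠ 0) :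
    ∃ v : ℕ → α, ∀ (s : ℕ) (hs : s < N), (v s, v (s + 1)) ∈ (x ⟨s, hs⟩).support := by
  classical
  suffices ∀ k < N, ∃ v : ℕ → α, ∀ (s : ℕ) (hs : s < N), s ≤ k →
      (v s, v (s + 1)) ∈ (x ⟨s, hs⟩).support by
    obtain ⟨v, hv⟩ := this (N - 1) (by omega)
    exact ⟨v, fun s hs => hv s hs (by omega)⟩
  intro k
  induction k with
  | zero =>
    intro _
    obtain ⟨q, hq⟩ := support_nonempty_iff.2 hx0
    refine ⟨Function.update (fun _ => q.2) 0 q.1, fun s _ hs0 => ?_⟩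
    obtain rfl : s = 0 := by omega
    simpa using hq
  | succ k ih =>
    intro hk
    obtain ⟨v, hv⟩ := ih (by omega)
    have hnext : v (k + 1) ∈ (mapDomain Prod.fst (x ⟨k + 1, hk⟩)).support := by
      rw [← hx k hk, mapDomain_support_of_subsingletonAddUnits]
      exact Finset.mem_image_of_mem _ (hv k (by omega) le_rfl)
    rw [mapDomain_support_of_subsingletonAddUnits] at hnext
    obtain ⟨q, hq, hq1⟩ := Finset.mem_image.1 hnext
    refine ⟨Function.update v (k + 2) q.2, fun s hs hsk => ?_⟩
    rcases Nat.lt_or_eq_of_le hsk with hsk | rfl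
    · simpa [Function.update_apply, show s ≠ k + 2 by omega, show s ≠ k + 1 by omega]
        using hv s hs (by omega)
    · simpa [← hq1] using hq

end Chain

section GradedSplitting

variable {M : Type*} [AddCommMonoid M] {P : AddSubmonoid M} {E : Set M} {ℓ : M →+ ℕ}

theorem AddSubmonoid.closure_eq_of_forall_exists_add (hE : E ⊆ P) (hℓE : ∀ e ∈ E, ℓ e = 1)
    (hsplit : ∀ x ∈ P, x ≠ 0 → ∃ e ∈ E, ∃ y ∈ P, x = e + y) :
    AddSubmonoid.closure E = P := by
  refine le_antisymm (AddSubmonoid.closure_le.2 hE) fun x hx => ?_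
  induction hn : ℓ x using Nat.strong_induction_on generalizing x with
  | _ n ih =>
    by_cases hx0 : x = 0
    · exact hx0 ▸ zero_mem _
    obtain ⟨e, he, y, hy, rfl⟩ := hsplit x hx hx0
    have hℓy : ℓ y < n := by rw [← hn, map_add, hℓE e he]; omega
    exact add_mem (AddSubmonoid.subset_closure he) (ih _ hℓy y hy rfl)

theorem AddSubmonoid.mem_iff_indecomposable_of_forall_exists_add (hE : E ⊆ P)
    (hℓE : ∀ e ∈ E, ℓ e = 1) (hℓ : ∀ x ∈ P, ℓ x = 0 → x = 0)
    (hsplit : ∀ x ∈ P, x ≠ 0 → ∃ e ∈ E, ∃ y ∈ P, x = e + y) (x : M) :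
    x ∈ E ↔ x ∈ P ∧ x ≠ 0 ∧ ¬∃ y z, y ∈ P ∧ z ∈ P ∧ y ≠ 0 ∧ z ≠ 0 ∧ x = y + z := by
  have hE0 : ∀ e ∈ E, e ≠ 0 := fun e he h0 => by simpa [h0] using hℓE e he
  have hℓpos : ∀ y ∈ P, y ≠ 0 → 0 < ℓ y := fun y hy hy0 =>
    Nat.pos_of_ne_zero fun h => hy0 (hℓ y hy h)
  constructor
  · intro hx
    refine ⟨hE hx, hE0 x hx, ?_⟩
    rintro ⟨y, z, hy, hz, hy0, hz0, rfl⟩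
    have hℓyz : ℓ y + ℓ z = 1 := by rw [← map_add, hℓE _ hx]
    have hℓy := hℓpos y hy hy0
    have hℓz := hℓpos z hz hz0
    omega
  · rintro ⟨hx, hx0, hatom⟩
    obtain ⟨e, he, y, hy, rfl⟩ := hsplit x hx hx0
    by_cases hy0 : y = 0
    · simpa [hy0] using he
    · exact (hatom ⟨e, y, hE he, hy, hE0 e he, hy0, rfl⟩).elim

end GradedSplitting

def pabCarrier (m a b : ℕ) : Set (BigM m a b) :=
  {x | (∀ s : Fin (a + b - 2), ∀ p ∈ (x s).support, validPair m a b s p) ∧ IsGlued x}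

theorem embP_apply (m a b : ℕ) (i : Fin (a + b - 1) → ZMod m) (s : ℕ) (hs : s < a + b - 2) :
    embP m a b i ⟨s, hs⟩ = single (i ⟨s, by omega⟩, i ⟨s + 1, by omega⟩) 1 := rfl

theorem mem_Xab_iff {m a b : ℕ} (hab : 3 ≤ a + b) (i : Fin (a + b - 1) → ZMod m) :
    i ∈ Xab m a b ↔ ∀ (s : ℕ) (hs : s < a + b - 2),
      validPair m a b s (i ⟨s, by omega⟩, i ⟨s + 1, by omega⟩) := by
  have hlast : (⟨a + b - 3 + 1, by omega⟩ : Fin (a + b - 1)) = ⟨a + b - 2, by omega⟩ :=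
    Fin.ext (by simp only; omega)
  constructor
  · rintro ⟨_, _, hfirst, hend, hstep⟩ s hs
    refine ⟨(hstep s (by omega)).1, (hstep s (by omega)).2, fun h => ?_, fun h => ?_⟩
    · subst h; exact hfirst
    · subst h; simpa only [hlast] using hend
  · intro h
    refine ⟨by omega, by omega, (h 0 (by omega)).2.2.1 rfl, ?_, fun k hk =>
      ⟨(h k (by omega)).1, (h k (by omega)).2.1⟩⟩
    simpa only [hlast] using (h (a + b - 3) (by omega)).2.2.2 rfl

theorem degree_embP (m a b : ℕ) (i : Fin (a + b - 1) → ZMod m) (s : Fin (a + b - 2)) :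
    degree (embP m a b i s) = 1 :=
  degree_single _ _

theorem embP_mem_pabCarrier {m a b : ℕ} (hab : 3 ≤ a + b) {i : Fin (a + b - 1) → ZMod m}
    (hi : i ∈ Xab m a b) : embP m a b i ∈ pabCarrier m a b := by
  refine ⟨fun ⟨s, hs⟩ p hp => ?_, fun s hs => ?_⟩
  · rw [embP_apply, support_single _ one_ne_zero, Finset.mem_singleton] at hp
    exact hp ▸ (mem_Xab_iff hab i).1 hi s hs
  · rw [embP_apply, embP_apply, mapDomain_single, mapDomain_single]

theorem pabCarrier.of_add_left {m a b : ℕ} {e y : BigM m a b} (hey : e + y ∈ pabCarrier m a b)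
    (he : e ∈ pabCarrier m a b) : y ∈ pabCarrier m a b :=
  ⟨fun s p hp => hey.1 s p (support_mono le_add_self hp), hey.2.of_add_left he.2⟩

theorem exists_embP_add_of_mem_pabCarrier {m a b : ℕ} (hab : 3 ≤ a + b) {x : BigM m a b}
    (hx : x ∈ pabCarrier m a b) (hx0 : x ≠ 0) :
    ∃ i ∈ Xab m a b, ∃ y ∈ pabCarrier m a b, x = embP m a b i + y := by
  have hN : 0 < a + b - 2 := by omega
  have hx00 : x ⟨0, hN⟩ ≠ 0 := fun h =>
    hx0 (hx.2.eq_zero_of_degree_eq_zero hN (by rw [h, map_zero]))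
  obtain ⟨v, hv⟩ := hx.2.exists_path hN hx00
  let i : Fin (a + b - 1) → ZMod m := fun k => v k
  have hi : i ∈ Xab m a b := (mem_Xab_iff hab i).2 fun s hs => hx.1 ⟨s, hs⟩ _ (hv s hs)
  have hle : embP m a b i ≤ x := fun ⟨s, hs⟩ => by
    rw [embP_apply, single_le_iff]
    exact Nat.one_le_iff_ne_zero.2 (mem_support_iff.1 (hv s hs))
  have hsplit : x = embP m a b i + (x - embP m a b i) := (add_tsub_cancel_of_le hle).symm
  exact ⟨i, hi, _, pabCarrier.of_add_left (hsplit ▸ hx) (embP_mem_pabCarrier hab hi), hsplit⟩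

/-- The toric fiber product semigroup `P(a,b)` — the submonoid of the
product of the free K-Pieri monoids consisting of tuples supported on valid generator
labels whose consecutive boundary data (weight and level) match — is generated by the
embedded tuples of `X_{a,b}`, and these are exactly its minimal generators (atoms):
every element of `emb(X_{a,b})` is nonzero and admits no decomposition into two nonzero
elements of `P(a,b)`, and conversely. -/
theorem Pab_minimal_generators (m a b : ℕ) (ha : 2 ≤ a) (hb : 2 ≤ b)
    (Pab : AddSubmonoid (BigM m a b))
    (hPab : (Pab : Set (BigM m a b)) =
      {x | (∀ s : Fin (a + b - 2), ∀ p ∈ (x s).support, validPair m a b s p) ∧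
        ∀ (s : ℕ) (hs : s + 1 < a + b - 2),
          Finsupp.mapDomain Prod.snd (x ⟨s, by omega⟩)
            = Finsupp.mapDomain Prod.fst (x ⟨s + 1, hs⟩)}) :
    AddSubmonoid.closure (embP m a b '' Xab m a b) = Pab ∧
    ∀ x : BigM m a b,
      x ∈ embP m a b '' Xab m a b ↔
        (x ∈ Pab ∧ x ≠ 0 ∧
          ¬∃ y z, y ∈ Pab ∧ z ∈ Pab ∧ y ≠ 0 ∧ z ≠ 0 ∧ x = y + z) := by
  have hab : 3 ≤ a + b := by omega
  have hN : 0 < a + b - 2 := by omega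
  have hP : ∀ x, x ∈ Pab ↔ x ∈ pabCarrier m a b := fun x => Set.ext_iff.1 hPab x
  let level : BigM m a b →+ ℕ := degree.comp (Pi.evalAddMonoidHom _ ⟨0, hN⟩)
  have hE : embP m a b '' Xab m a b ⊆ Pab := by
    rintro _ ⟨i, hi, rfl⟩
    exact (hP _).2 (embP_mem_pabCarrier hab hi)
  have hlevelE : ∀ e ∈ embP m a b '' Xab m a b, level e = 1 := by
    rintro _ ⟨i, -, rfl⟩
    exact degree_embP m a b i _
  have hlevel : ∀ x ∈ Pab, level x = 0 → x = 0 := fun x hx =>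
    ((hP x).1 hx).2.eq_zero_of_degree_eq_zero hN
  have hsplit : ∀ x ∈ Pab, x ≠ 0 → ∃ e ∈ embP m a b '' Xab m a b, ∃ y ∈ Pab, x = e + y := by
    intro x hx hx0
    obtain ⟨i, hi, y, hy, rfl⟩ := exists_embP_add_of_mem_pabCarrier hab ((hP _).1 hx) hx0
    exact ⟨_, ⟨i, hi, rfl⟩, y, (hP y).2 hy, rfl⟩
  exact ⟨AddSubmonoid.closure_eq_of_forall_exists_add hE hlevelE hsplit,
    AddSubmonoid.mem_iff_indecomposable_of_forall_exists_add hE hlevelE hlevel hsplit⟩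
end

section
/- If P = Δ_{k_1} ×_{Δ_{m_1}} Δ_{k_2} ×_{Δ_{m_2}} … ×_{Δ_{m_t}} Δ_{k_{t+1}} is an iterated fiber product of free commutative monoids over free commutative monoids, where each structure map sends generators to generators, then the toric ideal of ℂ[P] with respect to the fiber-product generating set has a quadratic, square-free Gröbner basis consisting of swap relations; in particular ℂ[P] is a Koszul algebra. -/
/-!
Fix linear orders on the generators of the factors, order the fiber-product generators
lexicographically, and compare monomials by `Finsupp.Lex`, under which a monomial is larger the
more copies it has of the smallest generators. An element of the toric ideal pairs each monomial
of its support with another one with the same marginals, so it suffices to show that a monomial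
`u` divisible by no leading term of a swap is the smallest monomial with its marginals.

Let `p` be the first generator at which `u` and a competitor `v` differ, and discard their common
part below `p`. Count the elements of `u` and of `v` agreeing with `p` on the coordinates `≤ i`.
For `i = 0` the counts agree, by the marginals. Passing from `i - 1` to `i` loses exactly the
elements whose `i`-th coordinate exceeds that of `p` (a smaller one would undercut `p`). In `v`
these are at most the elements that share `p`'s label at the gluing coordinate `i - 1` and have a
larger `i`-th coordinate; in `u` they are all of them, since for any other such element `g` the
swap of `p` and `g` at `i - 1` would have its leading term `p g` dividing `u`. These totals agree
by the marginals at `i`, so the count for `u` never exceeds that for `v`, and at the last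
coordinate this reads `u p ≤ v p`.
-/

open MvPolynomial

section

variable {t : ℕ} (G : Fin (t + 1) → Type) (B : Fin t → Type)
  (rB : (s : Fin t) → G s.castSucc → B s) (lB : (s : Fin t) → G s.succ → B s)

/-- Fiber-product generators: tuples of generators of the free factors whose images in
each base agree. -/
def GenP : Type :=
  {g : (s : Fin (t + 1)) → G s // ∀ s : Fin t, rB s (g s.castSucc) = lB s (g s.succ)}

/-- The iterated toric fiber product of the free commutative monoids on the `G s` over
the free commutative monoids on the `B s`, inside the ambient product monoid. -/
noncomputable def fiberP : AddSubmonoid ((s : Fin (t + 1)) → (G s →₀ ℕ)) where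
  carrier := {x | ∀ s : Fin t,
    Finsupp.mapDomain (rB s) (x s.castSucc) = Finsupp.mapDomain (lB s) (x s.succ)}
  zero_mem' := by intro s; simp
  add_mem' := by
    intro x y hx hy s
    simp only [Pi.add_apply, Finsupp.mapDomain_add, hx s, hy s]

/-- A fiber-product generator as an element of the ambient monoid. -/
noncomputable def embG (g : GenP G B rB lB) : (s : Fin (t + 1)) → (G s →₀ ℕ) :=
  fun s => Finsupp.single (g.val s) 1

/-- The toric presentation map `ℂ[x_g : g ∈ GenP] → ℂ[fiber product]`. -/
noncomputable def toricMap :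
    MvPolynomial (GenP G B rB lB) ℂ →ₐ[ℂ] AddMonoidAlgebra ℂ ((s : Fin (t + 1)) → (G s →₀ ℕ)) :=
  MvPolynomial.aeval (fun g => (AddMonoidAlgebra.single (embG G B rB lB g) 1 :
    AddMonoidAlgebra ℂ ((s : Fin (t + 1)) → (G s →₀ ℕ))))

/-- The swap relations: for generating tuples `g, h` sharing a boundary label at the
gluing coordinate `c`, the binomial `x_g x_h - x_{g'} x_{h'}` where `g', h'` exchange
the tails of `g, h` after `c`. -/
def swapPolys : Set (MvPolynomial (GenP G B rB lB) ℂ) :=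
  {f | ∃ g h g' h' : GenP G B rB lB, ∃ c : Fin t,
    rB c (g.val c.castSucc) = rB c (h.val c.castSucc) ∧
    (∀ s, g'.val s = if (s : ℕ) ≤ (c : ℕ) then g.val s else h.val s) ∧
    (∀ s, h'.val s = if (s : ℕ) ≤ (c : ℕ) then h.val s else g.val s) ∧
    f = X g * X h - X g' * X h'}

theorem Finsupp.exists_mem_support_ne_of_mapDomain_eq_zero {α β M : Type*} [AddCommMonoid M]
    {φ : α → β} {f : α →₀ M} (hf : Finsupp.mapDomain φ f = 0) {a : α} (ha : a ∈ f.support) :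
    ∃ b ∈ f.support, b ≠ a ∧ φ b = φ a := by
  classical
  by_contra! hfiber
  have hfa : Finsupp.mapDomain φ f (φ a) = f a := by
    rw [Finsupp.mapDomain, Finsupp.sum_apply, Finsupp.sum, Finset.sum_eq_single a]
    · simp
    · intro b hb hba
      simp [hfiber b hb hba]
    · exact fun ha' => absurd ha ha'
  exact Finsupp.mem_support_iff.mp ha (by rw [← hfa, hf, Finsupp.zero_apply])

theorem Finsupp.single_add_single_le {σ : Type*} {a b : σ} {u : σ →₀ ℕ} (hab : a ≠ b)
    (ha : a ∈ u.support) (hb : b ∈ u.support) : single a 1 + single b 1 ≤ u := by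
  classical
  intro x
  have ha' := Finsupp.mem_support_iff.mp ha
  have hb' := Finsupp.mem_support_iff.mp hb
  simp only [Finsupp.coe_add, Pi.add_apply, Finsupp.single_apply]
  split_ifs with hax hbx hbx
  · exact absurd (hax.trans hbx.symm) hab
  · subst hax; omega
  · subst hbx; omega
  · omega

theorem Finsupp.single_add_single_apply_le_one {σ : Type*} {a b : σ} (hab : a ≠ b) (x : σ) :
    (single a 1 + single b 1 : σ →₀ ℕ) x ≤ 1 := by
  classical
  simp only [Finsupp.coe_add, Pi.add_apply, Finsupp.single_apply]
  split_ifs <;> simp_all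

theorem Finsupp.toLex_single_add_single_lt {σ : Type*} [LinearOrder σ] {a b c d : σ}
    (hab : a < b) (hac : a < c) (had : a < d) :
    toLex (single c 1 + single d 1 : σ →₀ ℕ) < toLex (single a 1 + single b 1) := by
  refine Finsupp.Lex.lt_iff.mpr ⟨a, fun j hj => ?_, ?_⟩
  · simp [(hj.trans hab).ne', (hj.trans hac).ne', (hj.trans had).ne', hj.ne']
  · simp [hab.ne, hac.ne, had.ne]

theorem Multiset.countP_comp_eq_of_map_eq {α β : Type*} {U V : Multiset α} {f : α → β}
    (h : U.map f = V.map f) (P : β → Prop) [DecidablePred P] :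
    U.countP (fun a => P (f a)) = V.countP (fun a => P (f a)) := by
  rw [countP_eq_card_filter, countP_eq_card_filter, ← countP_map, ← countP_map, h]

theorem Multiset.countP_le_countP_of_imp {α : Type*} {U : Multiset α} {P Q : α → Prop}
    [DecidablePred P] [DecidablePred Q] (h : ∀ a ∈ U, P a → Q a) :
    U.countP P ≤ U.countP Q :=
  Quot.inductionOn U (fun l h => List.countP_mono_left (by simpa using h)) h

theorem MvPolynomial.X_mul_X_eq_monomial {σ R : Type*} [CommSemiring R] (a b : σ) :
    (X a * X b : MvPolynomial σ R) = monomial (Finsupp.single a 1 + Finsupp.single b 1) 1 := by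
  rw [X, X, monomial_mul, one_mul]

theorem MvPolynomial.eq_or_eq_of_mem_support_monomial_sub_monomial {σ R : Type*} [CommRing R]
    {m m' w : σ →₀ ℕ} {a b : R} (hw : w ∈ (monomial m a - monomial m' b).support) :
    w = m ∨ w = m' := by
  classical
  rcases Finset.mem_union.mp (support_sub σ _ _ hw) with hw | hw
  · exact .inl (Finset.mem_singleton.mp (support_monomial_subset hw))
  · exact .inr (Finset.mem_singleton.mp (support_monomial_subset hw))

theorem MvPolynomial.mem_support_monomial_sub_monomial {σ R : Type*} [CommRing R] [Nontrivial R]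
    {m m' : σ →₀ ℕ} (h : m ≠ m') : m ∈ (monomial m (1 : R) - monomial m' 1).support := by
  classical
  rw [mem_support_iff, coeff_sub, coeff_monomial, coeff_monomial, if_pos rfl, if_neg h.symm,
    sub_zero]
  exact one_ne_zero

noncomputable def MvPolynomial.leadingMonomialIdeal {σ R : Type*} [CommSemiring R]
    (le : (σ →₀ ℕ) → (σ →₀ ℕ) → Prop) (S : Set (MvPolynomial σ R)) : Ideal (MvPolynomial σ R) :=
  Ideal.span {q | ∃ f ∈ S, f ≠ 0 ∧ ∃ u, (u ∈ f.support ∧ ∀ v ∈ f.support, le v u) ∧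
    q = monomial u 1}

theorem MvPolynomial.leadingMonomialIdeal_mono {σ R : Type*} [CommSemiring R]
    (le : (σ →₀ ℕ) → (σ →₀ ℕ) → Prop) {S T : Set (MvPolynomial σ R)} (h : S ⊆ T) :
    leadingMonomialIdeal le S ≤ leadingMonomialIdeal le T :=
  Ideal.span_mono fun _ ⟨f, hf, hf0, u, hu, hq⟩ => ⟨f, h hf, hf0, u, hu, hq⟩

variable {G B rB lB}

namespace GenP

def splice (g h : GenP G B rB lB) (c : Fin t)
    (hc : rB c (g.val c.castSucc) = rB c (h.val c.castSucc)) : GenP G B rB lB :=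
  ⟨fun s => if (s : ℕ) ≤ c then g.val s else h.val s, fun s => by
    simp only [Fin.val_castSucc, Fin.val_succ]
    rcases lt_trichotomy (s : ℕ) c with hs | hs | hs
    · rw [if_pos hs.le, if_pos (by omega)]
      exact g.2 s
    · obtain rfl : s = c := Fin.ext hs
      rw [if_pos le_rfl, if_neg (by omega)]
      exact hc.trans (h.2 s)
    · rw [if_neg (by omega), if_neg (by omega)]
      exact h.2 s⟩

theorem splice_val (g h : GenP G B rB lB) (c : Fin t) (hc) (s : Fin (t + 1)) :
    (g.splice h c hc).val s = if (s : ℕ) ≤ c then g.val s else h.val s :=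
  rfl

theorem splice_self (g : GenP G B rB lB) (c : Fin t) (hc) : g.splice g c hc = g :=
  Subtype.ext <| funext fun s => by rw [splice_val, ite_self]

theorem eq_of_splice_eq_splice {g h : GenP G B rB lB} {c : Fin t} {hc}
    (heq : g.splice h c hc = h.splice g c hc.symm) : g = h :=
  Subtype.ext <| funext fun s => by
    have hs := congr_arg (fun k : GenP G B rB lB => k.val s) heq
    simp only [splice_val] at hs
    split_ifs at hs <;> first | exact hs | exact hs.symm

def AgreesUpTo (p : GenP G B rB lB) (i : Fin (t + 1)) (g : GenP G B rB lB) : Prop :=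
  ∀ j ≤ i, g.val j = p.val j

variable {p g : GenP G B rB lB}

theorem agreesUpTo_zero : p.AgreesUpTo 0 g ↔ g.val 0 = p.val 0 := by
  simp [AgreesUpTo]

theorem agreesUpTo_succ {c : Fin t} :
    p.AgreesUpTo c.succ g ↔ p.AgreesUpTo c.castSucc g ∧ g.val c.succ = p.val c.succ := by
  constructor
  · intro h
    exact ⟨fun j hj => h j (hj.trans (Fin.castSucc_le_succ c)), h _ le_rfl⟩
  · rintro ⟨h, hc⟩ j hj
    rcases hj.lt_or_eq with hj | rfl
    · exact h j (Fin.le_castSucc_iff.mpr hj)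
    · exact hc

theorem agreesUpTo_last : p.AgreesUpTo (Fin.last t) g ↔ g = p :=
  ⟨fun h => Subtype.ext (funext fun j => h j (Fin.le_last j)), fun h _ _ => h ▸ rfl⟩

end GenP

noncomputable def marginals : (GenP G B rB lB →₀ ℕ) →+ ((s : Fin (t + 1)) → (G s →₀ ℕ)) :=
  AddMonoidHom.pi fun s => Finsupp.mapDomain.addMonoidHom fun g => g.val s

theorem marginals_apply (u : GenP G B rB lB →₀ ℕ) (s : Fin (t + 1)) :
    marginals u s = Finsupp.mapDomain (fun g => g.val s) u :=
  rfl

theorem marginals_single (g : GenP G B rB lB) :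
    marginals (Finsupp.single g 1) = embG G B rB lB g :=
  funext fun s => by rw [marginals_apply, Finsupp.mapDomain_single, embG]

theorem marginals_swap (g h : GenP G B rB lB) (c : Fin t) (hc) :
    marginals (Finsupp.single (g.splice h c hc) 1 + Finsupp.single (h.splice g c hc.symm) 1) =
      marginals (Finsupp.single g 1 + Finsupp.single h 1) :=
  funext fun s => by
    simp only [marginals_apply, Finsupp.mapDomain_add,
      Finsupp.mapDomain_single, GenP.splice_val]
    split_ifs
    · rfl
    · exact add_comm _ _

theorem toricMap_eq_mapDomainAlgHom :
    toricMap G B rB lB = AddMonoidAlgebra.mapDomainAlgHom ℂ ℂ marginals :=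
  MvPolynomial.algHom_ext fun g => by
    rw [toricMap, aeval_X, AddMonoidAlgebra.mapDomainAlgHom_apply, X, monomial,
      AddMonoidAlgebra.lsingle_apply, AddMonoidAlgebra.mapDomain_single, marginals_single]

theorem toricMap_monomial (u : GenP G B rB lB →₀ ℕ) (a : ℂ) :
    toricMap G B rB lB (monomial u a) = AddMonoidAlgebra.single (marginals u) a := by
  rw [toricMap_eq_mapDomainAlgHom, AddMonoidAlgebra.mapDomainAlgHom_apply, monomial,
    AddMonoidAlgebra.lsingle_apply, AddMonoidAlgebra.mapDomain_single]

theorem exists_ne_marginals_eq_of_mem_ker {f : MvPolynomial (GenP G B rB lB) ℂ}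
    (hf : f ∈ RingHom.ker (toricMap G B rB lB).toRingHom) {u : GenP G B rB lB →₀ ℕ}
    (hu : u ∈ f.support) : ∃ v ∈ f.support, v ≠ u ∧ marginals v = marginals u := by
  refine Finsupp.exists_mem_support_ne_of_mapDomain_eq_zero ?_ hu
  have hf0 : toricMap G B rB lB f = 0 := hf
  rw [toricMap_eq_mapDomainAlgHom, AddMonoidAlgebra.mapDomainAlgHom_apply] at hf0
  rw [← AddMonoidAlgebra.coeff_mapDomain, hf0, AddMonoidAlgebra.coeff_zero]

noncomputable def swapBinomial (g h : GenP G B rB lB) (c : Fin t)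
    (hc : rB c (g.val c.castSucc) = rB c (h.val c.castSucc)) :
    MvPolynomial (GenP G B rB lB) ℂ :=
  X g * X h - X (g.splice h c hc) * X (h.splice g c hc.symm)

theorem mem_swapPolys_iff {f : MvPolynomial (GenP G B rB lB) ℂ} :
    f ∈ swapPolys G B rB lB ↔ ∃ g h c hc, f = swapBinomial g h c hc := by
  constructor
  · rintro ⟨g, h, g', h', c, hc, hg', hh', rfl⟩
    obtain rfl : g' = g.splice h c hc := Subtype.ext (funext hg')
    obtain rfl : h' = h.splice g c hc.symm := Subtype.ext (funext hh')
    exact ⟨g, h, c, hc, rfl⟩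
  · rintro ⟨g, h, c, hc, rfl⟩
    exact ⟨g, h, _, _, c, hc, fun _ => rfl, fun _ => rfl, rfl⟩

theorem swapBinomial_eq (g h : GenP G B rB lB) (c : Fin t) (hc) :
    swapBinomial g h c hc =
      monomial (Finsupp.single g 1 + Finsupp.single h 1) 1 -
        monomial (Finsupp.single (g.splice h c hc) 1 + Finsupp.single (h.splice g c hc.symm) 1)
          1 := by
  rw [swapBinomial, X_mul_X_eq_monomial, X_mul_X_eq_monomial]

theorem swapBinomial_mem_ker (g h : GenP G B rB lB) (c : Fin t) (hc) :
    swapBinomial g h c hc ∈ RingHom.ker (toricMap G B rB lB).toRingHom := by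
  rw [RingHom.mem_ker, swapBinomial_eq]
  change toricMap G B rB lB (_ - _) = 0
  rw [map_sub, toricMap_monomial, toricMap_monomial, marginals_swap, sub_self]

theorem totalDegree_swapBinomial_le (g h : GenP G B rB lB) (c : Fin t) (hc) :
    (swapBinomial g h c hc).totalDegree ≤ 2 := by
  have hXX : ∀ a b : GenP G B rB lB, (X a * X b : MvPolynomial _ ℂ).totalDegree ≤ 2 :=
    fun a b => (totalDegree_mul _ _).trans (by rw [totalDegree_X, totalDegree_X])
  exact (totalDegree_sub _ _).trans (max_le (hXX _ _) (hXX _ _))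

theorem swapBinomial_squarefree (g h : GenP G B rB lB) (c : Fin t) (hc)
    {u : GenP G B rB lB →₀ ℕ} (hu : u ∈ (swapBinomial g h c hc).support) (x : GenP G B rB lB) :
    u x ≤ 1 := by
  rcases eq_or_ne g h with rfl | hgh
  · simp [swapBinomial, GenP.splice_self] at hu
  rw [swapBinomial_eq] at hu
  rcases eq_or_eq_of_mem_support_monomial_sub_monomial hu with rfl | rfl
  · exact Finsupp.single_add_single_apply_le_one hgh x
  · exact Finsupp.single_add_single_apply_le_one (fun he => hgh (GenP.eq_of_splice_eq_splice he)) x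

theorem swapPolys_subset_ker :
    swapPolys G B rB lB ⊆ RingHom.ker (toricMap G B rB lB).toRingHom := fun _ hf => by
  obtain ⟨g, h, c, hc, rfl⟩ := mem_swapPolys_iff.mp hf
  exact swapBinomial_mem_ker g h c hc

section LexOrder

variable [∀ s, LinearOrder (G s)]

noncomputable instance : LinearOrder (GenP G B rB lB) :=
  LinearOrder.lift' (fun g => toLex g.val) fun _ _ h => Subtype.ext (toLex.injective h)

namespace GenP

theorem lt_iff {g h : GenP G B rB lB} :
    g < h ↔ ∃ j, (∀ k < j, g.val k = h.val k) ∧ g.val j < h.val j :=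
  Iff.rfl

variable {p g : GenP G B rB lB}

theorem lt_of_agreesUpTo {c : Fin t} (hg : p.AgreesUpTo c.castSucc g)
    (hlt : g.val c.succ < p.val c.succ) : g < p :=
  lt_iff.mpr ⟨c.succ, fun k hk => hg k (Fin.le_castSucc_iff.mpr hk), hlt⟩

theorem exists_lt_of_not_agreesUpTo {i : Fin (t + 1)} (hpg : p < g) (hg : ¬p.AgreesUpTo i g) :
    ∃ j ≤ i, (∀ k < j, g.val k = p.val k) ∧ p.val j < g.val j := by
  obtain ⟨j, hj, hlt⟩ := lt_iff.mp hpg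
  refine ⟨j, ?_, fun k hk => (hj k hk).symm, hlt⟩
  by_contra! hij
  exact hg fun k hk => (hj k (hk.trans_lt hij)).symm

end GenP

def SwapReducible (u : GenP G B rB lB →₀ ℕ) : Prop :=
  ∃ g h c hc, Finsupp.single g 1 + Finsupp.single h 1 ≤ u ∧
    toLex (Finsupp.single (g.splice h c hc) 1 + Finsupp.single (h.splice g c hc.symm) 1) <
      toLex (Finsupp.single g 1 + Finsupp.single h 1)

theorem SwapReducible.mono {u w : GenP G B rB lB →₀ ℕ} (hu : SwapReducible u) (huw : u ≤ w) :
    SwapReducible w :=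
  let ⟨g, h, c, hc, hle, hlt⟩ := hu
  ⟨g, h, c, hc, hle.trans huw, hlt⟩

theorem agreesUpTo_of_not_swapReducible {u : GenP G B rB lB →₀ ℕ} (hu : ¬SwapReducible u)
    {p g : GenP G B rB lB} (hp : p ∈ u.support) (hg : g ∈ u.support) (hpg : p ≤ g) {c : Fin t}
    (hlabel : lB c (g.val c.succ) = rB c (p.val c.castSucc))
    (hlt : p.val c.succ < g.val c.succ) : p.AgreesUpTo c.castSucc g := by
  by_contra hna
  have hplt : p < g := lt_of_le_of_ne hpg (by rintro rfl; exact hna fun _ _ => rfl)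
  obtain ⟨j, hjc, hagree, hj⟩ := GenP.exists_lt_of_not_agreesUpTo hplt hna
  have hc : rB c (p.val c.castSucc) = rB c (g.val c.castSucc) := hlabel.symm.trans (g.2 c).symm
  have hjc' : (j : ℕ) ≤ c := by simpa [Fin.le_def] using hjc
  refine hu ⟨p, g, c, hc, Finsupp.single_add_single_le hplt.ne hp hg,
    Finsupp.toLex_single_add_single_lt hplt
      (GenP.lt_iff.mpr ⟨c.succ, fun k hk => ?_, ?_⟩) (GenP.lt_iff.mpr ⟨j, fun k hk => ?_, ?_⟩)⟩
  · rw [GenP.splice_val, if_pos (by simpa [Fin.lt_def, Nat.lt_succ_iff] using hk)]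
  · rwa [GenP.splice_val, if_neg (by simp)]
  · rw [GenP.splice_val, if_pos (by rw [Fin.lt_def] at hk; omega), hagree k hk]
  · rwa [GenP.splice_val, if_pos hjc']

open scoped Classical in
theorem countP_agreesUpTo_castSucc {W : Multiset (GenP G B rB lB)} {p : GenP G B rB lB}
    (hW : ∀ g ∈ W, p ≤ g) (c : Fin t) :
    W.countP (p.AgreesUpTo c.castSucc) = W.countP (p.AgreesUpTo c.succ) +
      W.countP (fun g => p.AgreesUpTo c.castSucc g ∧ p.val c.succ < g.val c.succ) := by
  rw [Multiset.countP_eq_countP_filter_add W _ (fun g => g.val c.succ = p.val c.succ),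
    Multiset.countP_filter, Multiset.countP_filter]
  congr 1
  · exact Multiset.countP_congr rfl fun g _ => propext GenP.agreesUpTo_succ.symm
  · refine Multiset.countP_congr rfl fun g hg => propext
      ⟨fun ⟨hpre, hne⟩ => ⟨hpre, lt_of_le_of_ne ?_ (Ne.symm hne)⟩,
        fun ⟨hpre, hlt⟩ => ⟨hpre, hlt.ne'⟩⟩
    exact not_lt.mp fun hlt => (hW g hg).not_gt (GenP.lt_of_agreesUpTo hpre hlt)

open scoped Classical in
theorem countP_agreesUpTo_succ_le {U V : Multiset (GenP G B rB lB)} {p : GenP G B rB lB}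
    {c : Fin t} (hUV : U.map (fun g => g.val c.succ) = V.map (fun g => g.val c.succ))
    (hU : ∀ g ∈ U, p ≤ g) (hV : ∀ g ∈ V, p ≤ g)
    (hUagree : ∀ g ∈ U, lB c (g.val c.succ) = rB c (p.val c.castSucc) →
      p.val c.succ < g.val c.succ → p.AgreesUpTo c.castSucc g)
    (hcast : U.countP (p.AgreesUpTo c.castSucc) ≤ V.countP (p.AgreesUpTo c.castSucc)) :
    U.countP (p.AgreesUpTo c.succ) ≤ V.countP (p.AgreesUpTo c.succ) := by
  set L : G c.succ → Prop := fun y => lB c y = rB c (p.val c.castSucc) ∧ p.val c.succ < y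
  have hLU : U.countP (fun g => L (g.val c.succ)) ≤
      U.countP (fun g => p.AgreesUpTo c.castSucc g ∧ p.val c.succ < g.val c.succ) :=
    Multiset.countP_le_countP_of_imp fun g hg hL => ⟨hUagree g hg hL.1 hL.2, hL.2⟩
  have hLV : V.countP (fun g => p.AgreesUpTo c.castSucc g ∧ p.val c.succ < g.val c.succ) ≤
      V.countP (fun g => L (g.val c.succ)) :=
    Multiset.countP_le_countP_of_imp fun g _ ⟨hpre, hlt⟩ =>
      ⟨by rw [← g.2 c, hpre c.castSucc le_rfl], hlt⟩
  have hL := Multiset.countP_comp_eq_of_map_eq hUV L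
  have hsplitU := countP_agreesUpTo_castSucc hU c
  have hsplitV := countP_agreesUpTo_castSucc hV c
  omega

theorem apply_le_apply_of_not_swapReducible {u v : GenP G B rB lB →₀ ℕ}
    (hu : ¬SwapReducible u) (huv : marginals u = marginals v) {p : GenP G B rB lB}
    (hp : p ∈ u.support) (hpu : ∀ g ∈ u.support, p ≤ g) (hpv : ∀ g ∈ v.support, p ≤ g) :
    u p ≤ v p := by
  classical
  have hmap : ∀ s, (Finsupp.toMultiset u).map (fun g => g.val s) =
      (Finsupp.toMultiset v).map (fun g => g.val s) := fun s => by
    rw [Finsupp.toMultiset_map, Finsupp.toMultiset_map, ← marginals_apply, ← marginals_apply,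
      huv]
  have hagree : ∀ i, (Finsupp.toMultiset u).countP (p.AgreesUpTo i) ≤
      (Finsupp.toMultiset v).countP (p.AgreesUpTo i) := by
    intro i
    induction i using Fin.induction with
    | zero =>
      rw [Multiset.countP_congr rfl fun g _ => propext GenP.agreesUpTo_zero,
        Multiset.countP_congr rfl fun g _ => propext GenP.agreesUpTo_zero]
      exact (Multiset.countP_comp_eq_of_map_eq (hmap 0) (· = p.val 0)).le
    | succ c ih =>
      refine countP_agreesUpTo_succ_le (hmap c.succ)
        (fun g hg => hpu g ((Finsupp.mem_toMultiset u g).mp hg))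
        (fun g hg => hpv g ((Finsupp.mem_toMultiset v g).mp hg))
        (fun g hg hlabel hlt => ?_) ih
      exact agreesUpTo_of_not_swapReducible hu hp ((Finsupp.mem_toMultiset u g).mp hg)
        (hpu g ((Finsupp.mem_toMultiset u g).mp hg)) hlabel hlt
  have hcount : ∀ w : GenP G B rB lB →₀ ℕ,
      (Finsupp.toMultiset w).countP (p.AgreesUpTo (Fin.last t)) = w p := fun w => by
    rw [← Finsupp.count_toMultiset]
    exact Multiset.countP_congr rfl fun g _ => propext (GenP.agreesUpTo_last.trans eq_comm)
  simpa only [hcount] using hagree (Fin.last t)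

theorem toLex_lt_of_not_swapReducible {u v : GenP G B rB lB →₀ ℕ} (hu : ¬SwapReducible u)
    (huv : marginals u = marginals v) (hne : u ≠ v) : toLex u < toLex v := by
  classical
  set p := (u.neLocus v).min' (Finsupp.nonempty_neLocus_iff.mpr hne)
  have hbelow : ∀ q < p, u q = v q := fun q hq => by
    by_contra h
    exact (Finset.min'_le _ q (Finsupp.mem_neLocus.mpr h)).not_gt hq
  refine Finsupp.Lex.lt_iff.mpr ⟨p, hbelow, lt_of_le_of_ne ?_
    (Finsupp.mem_neLocus.mp (Finset.min'_mem _ _))⟩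
  rcases eq_or_ne (u p) 0 with hp | hp
  · exact hp ▸ Nat.zero_le _
  have hlow : u.filter (· < p) = v.filter (· < p) := by
    ext q
    simp only [Finsupp.filter_apply]
    split_ifs with hq
    exacts [hbelow q hq, rfl]
  have hmarg : marginals (u.filter (¬· < p)) = marginals (v.filter (¬· < p)) := by
    rw [← Finsupp.filter_add_filter_not u (· < p), ← Finsupp.filter_add_filter_not v (· < p),
      map_add, map_add, hlow] at huv
    exact add_left_cancel huv
  have hge : ∀ w : GenP G B rB lB →₀ ℕ, ∀ g ∈ (w.filter (¬· < p)).support, p ≤ g :=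
    fun w g hg => by
      rw [Finsupp.support_filter, Finset.mem_filter] at hg
      exact not_lt.mp hg.2
  have hred : ¬SwapReducible (u.filter (¬· < p)) := fun h =>
    hu (h.mono fun q => by rw [Finsupp.filter_apply]; split_ifs <;> simp)
  have := apply_le_apply_of_not_swapReducible hred hmarg
    (by simpa [Finsupp.filter_apply] using hp) (hge u) (hge v)
  simpa [Finsupp.filter_apply] using this

theorem swapReducible_of_leading_mem_ker {f : MvPolynomial (GenP G B rB lB) ℂ}
    (hf : f ∈ RingHom.ker (toricMap G B rB lB).toRingHom) {u : GenP G B rB lB →₀ ℕ}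
    (hu : u ∈ f.support) (hmax : ∀ v ∈ f.support, toLex v ≤ toLex u) : SwapReducible u := by
  by_contra hred
  obtain ⟨v, hv, hvu, hm⟩ := exists_ne_marginals_eq_of_mem_ker hf hu
  exact (hmax v hv).not_gt (toLex_lt_of_not_swapReducible hred hm.symm hvu.symm)

theorem monomial_mem_leadingMonomialIdeal_swapPolys {u : GenP G B rB lB →₀ ℕ}
    (hu : SwapReducible u) :
    monomial u 1 ∈ leadingMonomialIdeal (fun v w => toLex v ≤ toLex w) (swapPolys G B rB lB) := by
  obtain ⟨g, h, c, hc, hle, hlt⟩ := hu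
  have hmem : Finsupp.single g 1 + Finsupp.single h 1 ∈ (swapBinomial g h c hc).support := by
    rw [swapBinomial_eq]
    exact mem_support_monomial_sub_monomial fun he => hlt.ne' (congrArg toLex he)
  rw [← tsub_add_cancel_of_le hle, ← one_mul (1 : ℂ), ← monomial_mul]
  refine Ideal.mul_mem_left _ _ (Ideal.subset_span ⟨swapBinomial g h c hc,
    mem_swapPolys_iff.mpr ⟨g, h, c, hc, rfl⟩, support_nonempty.mp ⟨_, hmem⟩, _, ⟨hmem, ?_⟩, rfl⟩)
  intro v hv
  rw [swapBinomial_eq] at hv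
  rcases eq_or_eq_of_mem_support_monomial_sub_monomial hv with rfl | rfl
  exacts [le_rfl, hlt.le]

theorem leadingMonomialIdeal_ker_le_swapPolys :
    leadingMonomialIdeal (fun v w => toLex v ≤ toLex w)
        (RingHom.ker (toricMap G B rB lB).toRingHom : Set (MvPolynomial (GenP G B rB lB) ℂ)) ≤
      leadingMonomialIdeal (fun v w => toLex v ≤ toLex w) (swapPolys G B rB lB) := by
  rw [leadingMonomialIdeal, Ideal.span_le]
  rintro _ ⟨f, hf, -, u, ⟨hu, hmax⟩, rfl⟩
  exact monomial_mem_leadingMonomialIdeal_swapPolys (swapReducible_of_leading_mem_ker hf hu hmax)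

end LexOrder

/-- For an iterated fiber product of free commutative monoids over
free commutative monoids with structure maps sending generators to generators, the toric
ideal (the kernel of the presentation map) admits a quadratic, square-free Gröbner basis
consisting of the swap relations: for some monomial order (a linear order on monomials,
compatible with addition and with `0` minimal), the swaps lie in the toric ideal, are
quadratic and square-free, and their leading monomials generate the same monomial ideal
as the leading monomials of the whole toric ideal.  (In particular `ℂ[P]` is Koszul.) -/
theorem swap_groebner_basis :
    ∃ lin : LinearOrder ((GenP G B rB lB) →₀ ℕ),
      (∀ u v w, lin.le u v → lin.le (u + w) (v + w)) ∧
      (∀ u, lin.le 0 u) ∧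
      (∀ f ∈ swapPolys G B rB lB, f ∈ RingHom.ker (toricMap G B rB lB).toRingHom) ∧
      (∀ f ∈ swapPolys G B rB lB, f.totalDegree ≤ 2 ∧ ∀ u ∈ f.support, ∀ g, u g ≤ 1) ∧
      Ideal.span {q : MvPolynomial (GenP G B rB lB) ℂ |
          ∃ f ∈ swapPolys G B rB lB, f ≠ 0 ∧ ∃ u,
            (u ∈ f.support ∧ ∀ v ∈ f.support, lin.le v u) ∧ q = monomial u 1}
        = Ideal.span {q : MvPolynomial (GenP G B rB lB) ℂ |
          ∃ f ∈ RingHom.ker (toricMap G B rB lB).toRingHom, f ≠ 0 ∧ ∃ u,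
            (u ∈ f.support ∧ ∀ v ∈ f.support, lin.le v u) ∧ q = monomial u 1} := by
  let : ∀ s, LinearOrder (G s) := fun _ => IsWellOrder.linearOrder WellOrderingRel
  refine ⟨LinearOrder.lift' toLex toLex.injective, fun u v w h => ?_,
    fun u => Finsupp.toLex_monotone (zero_le (a := u)), swapPolys_subset_ker, fun f hf => ?_, ?_⟩
  · change toLex (u + w) ≤ toLex (v + w)
    rw [toLex_add, toLex_add]
    exact add_le_add_left (show toLex u ≤ toLex v from h) (toLex w)
  · obtain ⟨g, h, c, hc, rfl⟩ := mem_swapPolys_iff.mp hf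
    exact ⟨totalDegree_swapBinomial_le g h c hc, fun u hu => swapBinomial_squarefree g h c hc hu⟩
  · change leadingMonomialIdeal (fun v w => toLex v ≤ toLex w) _ =
      leadingMonomialIdeal (fun v w => toLex v ≤ toLex w) _
    exact le_antisymm (leadingMonomialIdeal_mono _ swapPolys_subset_ker)
      leadingMonomialIdeal_ker_le_swapPolys

end
end
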